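/- arXiv:1802.09391 — 5 statements merged into one kernel-verified Lean document; each statement's English description precedes it below -/
import Mathlib

section
/- If a contract is incentive compatible for Bill APOs, then for any two Bill types i and j, the Wi-Fi access price satisfies p_i > p_j if and only if the subscription fee satisfies δ_i > δ_j. -/
/-- Under incentive compatibility for Bill APOs, for any two Bill types
`i` and `j`, the price satisfies `p i > p j` iff the subscription fee satisfies `δ i > δ j`. -/
theorem bill_price_iff_fee
    (B : Set ℕ) (pmax ω : ℝ) (hω : 0 < ω)
    (p δ β : ℕ → ℝ) (g : ℕ → ℝ → ℝ)
    (hg : ∀ k, StrictMonoOn (g k) (Set.Icc 0 pmax))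
    (hp : ∀ k ∈ B, p k ∈ Set.Icc 0 pmax)
    (hIC : ∀ k ∈ B, ∀ i ∈ B,
      ω * g k (p k) - δ k - β k ≥ ω * g k (p i) - δ i - β k) :
    ∀ i ∈ B, ∀ j ∈ B, (p i > p j ↔ δ i > δ j) := by
  intro i hi j hj
  constructor
  · intro hpij
    have h1 := hIC j hj i hi
    have hgj : g j (p j) < g j (p i) := hg j (hp j hj) (hp i hi) hpij
    nlinarith
  · intro hdij
    have h2 := hIC i hi j hj
    have hgi : g i (p j) < g i (p i) := by nlinarith
    by_contra hle
    push_neg at hle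
    rcases lt_or_eq_of_le hle with h | h
    · exact absurd (hg i (hp i hi) (hp j hj) h) (not_lt.2 hgi.le)
    · rw [h] at hgi; exact lt_irrefl _ hgi
end

section
/- Suppose a contract is feasible (satisfies IC and IR constraints) with the quality-monotone payoff structure: a Linus of type k gets payoff 0, and a Bill of type k choosing item (p, δ) gets payoff μ·g_k(p) − δ − ν, where g_k(p) is strictly increasing in k for each fixed p > 0. Then there exists a critical type m ∈ {1, ..., K+1} such that all types k < m are Linus and all types k ≥ m are Bills. -/
/-- In a feasible contract with quality-monotone payoff structure, there
is a critical type `m ∈ {1, ..., K+1}`: all types `k < m` are Linus and all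
types `k ≥ m` are Bills. -/
theorem exists_critical_type
    (K : ℕ) (B : Set ℕ) (hB : B ⊆ Set.Icc 1 K)
    (μ ν : ℝ) (hμ : 0 < μ) (hν : 0 ≤ ν)
    (p δ : ℕ → ℝ) (g : ℕ → ℝ → ℝ)
    (hgmono : ∀ i j : ℕ, j < i → ∀ q : ℝ, 0 < q → g j q < g i q)
    (hg0 : ∀ k, g k 0 = 0)
    (hppos : ∀ k ∈ B, 0 < p k)
    (hIR : ∀ k ∈ B, μ * g k (p k) - δ k - ν ≥ 0)
    (hICL : ∀ j ∈ Set.Icc 1 K, j ∉ B → ∀ k ∈ B, μ * g j (p k) - δ k - ν ≤ 0) :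
    ∃ m : ℕ, 1 ≤ m ∧ m ≤ K + 1 ∧
      ∀ k ∈ Set.Icc 1 K, (k < m → k ∉ B) ∧ (m ≤ k → k ∈ B) := by
  -- B is upward closed within Icc 1 K
  have hup : ∀ j ∈ Set.Icc 1 K, ∀ k ∈ B, k ≤ j → j ∈ B := by
    intro j hj k hk hkj
    by_contra hjB
    rcases eq_or_lt_of_le hkj with rfl | hlt
    · exact hjB hk
    have h1 := hIR k hk
    have h2 := hICL j hj hjB k hk
    have h3 : g k (p k) < g j (p k) := hgmono j k hlt _ (hppos k hk)
    nlinarith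
  set m := sInf (B ∪ {K + 1}) with hm
  have hKmem : K + 1 ∈ B ∪ {K + 1} := Or.inr rfl
  have hmle : m ≤ K + 1 := Nat.sInf_le hKmem
  have hm1 : 1 ≤ m := by
    have hmm : m ∈ B ∪ {K + 1} := Nat.sInf_mem ⟨K + 1, hKmem⟩
    rcases hmm with h | h
    · exact (hB h).1
    · simp only [Set.mem_singleton_iff] at h; omega
  refine ⟨m, hm1, hmle, fun k hk => ⟨?_, ?_⟩⟩
  · intro hkm hkB
    have hle : m ≤ k := hm ▸ Nat.sInf_le (Or.inl hkB)
    omega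
  · intro hmk
    have hmm : m ∈ B ∪ {K + 1} := Nat.sInf_mem ⟨K + 1, hKmem⟩
    rcases hmm with h | h
    · exact hup k hk m h hmk
    · simp only [Set.mem_singleton_iff] at h
      have := hk.2; omega
end

section
/- Given a critical type m and a feasible price assignment 0 ≤ p_m ≤ p_{m+1} ≤ ... ≤ p_K ≤ p_max, the subscription fees defined recursively by δ*_m = ω·g_m(p_m) − β_m and δ*_k = δ*_{k−1} + ω·(g_k(p_k) − g_k(p_{k−1})) for k = m+1, ..., K satisfy the pairwise IC constraints ω·(g_i(p_k) − g_i(p_i)) ≤ δ*_k − δ*_i ≤ ω·(g_k(p_k) − g_k(p_i)) for all m ≤ i < k ≤ K. -/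
/-- Given a critical type `m` and a nondecreasing feasible price assignment,
the recursively defined subscription fees satisfy the pairwise IC constraints
`ω·(g_i(p_k) − g_i(p_i)) ≤ δ*_k − δ*_i ≤ ω·(g_k(p_k) − g_k(p_i))` for `m ≤ i < k ≤ K`. -/
theorem recursive_fees_satisfy_IC
    (m K : ℕ) (hmK : m ≤ K) (pmax ω βm : ℝ) (hω : 0 < ω)
    (g : ℕ → ℝ → ℝ) (p δ : ℕ → ℝ)
    (hgmono : ∀ k, StrictMonoOn (g k) (Set.Icc 0 pmax))
    (hID : ∀ k i : ℕ, i < k → ∀ q q' : ℝ, q ∈ Set.Icc 0 pmax → q' ∈ Set.Icc 0 pmax →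
      q < q' → g i q' - g i q ≤ g k q' - g k q)
    (hpbox : ∀ k, m ≤ k → k ≤ K → p k ∈ Set.Icc 0 pmax)
    (hpmono : ∀ k, m ≤ k → k < K → p k ≤ p (k + 1))
    (hbase : δ m = ω * g m (p m) - βm)
    (hrec : ∀ k, m < k → k ≤ K →
      δ k = δ (k - 1) + ω * (g k (p k) - g k (p (k - 1)))) :
    ∀ i k : ℕ, m ≤ i → i < k → k ≤ K →
      ω * (g i (p k) - g i (p i)) ≤ δ k - δ i ∧
      δ k - δ i ≤ ω * (g k (p k) - g k (p i)) := by
  have hID' : ∀ k i : ℕ, i < k → ∀ q q' : ℝ, q ∈ Set.Icc 0 pmax → q' ∈ Set.Icc 0 pmax →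
      q ≤ q' → g i q' - g i q ≤ g k q' - g k q := by
    intro k i hik q q' hq hq' hle
    rcases eq_or_lt_of_le hle with h | h
    · subst h; simp
    · exact hID k i hik q q' hq hq' h
  have hpm : ∀ i, m ≤ i → ∀ k, i ≤ k → k ≤ K → p i ≤ p k := by
    intro i hmi k hik
    induction k, hik using Nat.le_induction with
    | base => intro _; exact le_rfl
    | succ n hn ih =>
      intro hK
      have hnK : n ≤ K := Nat.le_of_succ_le hK
      exact le_trans (ih hnK) (hpmono n (le_trans hmi hn) (Nat.lt_of_succ_le hK))
  intro i k hmi hik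
  induction k, hik using Nat.le_induction with
  | base =>
    intro hK
    have hδ := hrec (i + 1) (Nat.lt_succ_of_le hmi) hK
    simp only [Nat.add_sub_cancel] at hδ
    have hb1 : p i ∈ Set.Icc 0 pmax := hpbox i hmi (le_trans (Nat.le_succ i) hK)
    have hb2 : p (i + 1) ∈ Set.Icc 0 pmax := hpbox (i + 1) (le_trans hmi (Nat.le_succ i)) hK
    have hple : p i ≤ p (i + 1) := hpmono i hmi (Nat.lt_of_succ_le hK)
    have h1 : g i (p (i+1)) - g i (p i) ≤ g (i+1) (p (i+1)) - g (i+1) (p i) :=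
      hID' (i+1) i (Nat.lt_succ_self i) _ _ hb1 hb2 hple
    constructor
    · nlinarith
    · nlinarith
  | succ n hn ih =>
    intro hK
    have hnK : n ≤ K := Nat.le_of_succ_le hK
    obtain ⟨ihl, ihu⟩ := ih hnK
    have hmn : m ≤ n := le_trans hmi (Nat.le_of_succ_le hn)
    have hδ := hrec (n + 1) (Nat.lt_succ_of_le hmn) hK
    simp only [Nat.add_sub_cancel] at hδ
    have hbi : p i ∈ Set.Icc 0 pmax := hpbox i hmi (le_trans (Nat.le_of_succ_le hn) hnK)
    have hbn : p n ∈ Set.Icc 0 pmax := hpbox n hmn hnK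
    have hbn1 : p (n + 1) ∈ Set.Icc 0 pmax := hpbox (n + 1) (le_trans hmn (Nat.le_succ n)) hK
    have hpn : p n ≤ p (n + 1) := hpmono n hmn (Nat.lt_of_succ_le hK)
    have hpin : p i ≤ p n := hpm i hmi n (Nat.le_of_succ_le hn) hnK
    have h1 : g i (p (n+1)) - g i (p n) ≤ g (n+1) (p (n+1)) - g (n+1) (p n) :=
      hID' (n+1) i (lt_trans (Nat.lt_of_succ_le hn) (Nat.lt_succ_self n)) _ _ hbn hbn1 hpn
    have h2 : g n (p n) - g n (p i) ≤ g (n+1) (p n) - g (n+1) (p i) :=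
      hID' (n+1) n (Nat.lt_succ_self n) _ _ hbi hbn hpin
    constructor
    · nlinarith
    · nlinarith
end

section
/- In the heterogeneous mobility model, if a contract is incentive compatible across all Bill types (k,l), then p_{k,l} > p_{i,j} if and only if δ_{k,l} > δ_{i,j}. -/
/-- Heterogeneous mobility model: if a contract is incentive compatible
across all Bill types `(k, l)`, then `p_{k,l} > p_{i,j}` iff `δ_{k,l} > δ_{i,j}`. -/
theorem hetero_price_iff_fee
    (B : Set (ℕ × ℕ)) (pmax : ℝ)
    (ω : ℕ → ℝ) (hω : ∀ l, 0 < ω l)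
    (p δ β : ℕ × ℕ → ℝ) (g : ℕ → ℝ → ℝ)
    (hg : ∀ k, StrictMonoOn (g k) (Set.Icc 0 pmax))
    (hp : ∀ kl ∈ B, p kl ∈ Set.Icc 0 pmax)
    (hIC : ∀ kl ∈ B, ∀ ij ∈ B,
      ω kl.2 * g kl.1 (p kl) - δ kl - β kl ≥ ω kl.2 * g kl.1 (p ij) - δ ij - β kl) :
    ∀ kl ∈ B, ∀ ij ∈ B, (p kl > p ij ↔ δ kl > δ ij) := by
  intro kl hkl ij hij
  have h1 := hIC kl hkl ij hij
  have h2 := hIC ij hij kl hkl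
  constructor
  · intro hpgt
    -- use ij's IC: δ kl - δ ij ≥ ω ij.2 * (g ij.1 (p kl) - g ij.1 (p ij)) > 0
    have hgij : g ij.1 (p ij) < g ij.1 (p kl) := hg ij.1 (hp ij hij) (hp kl hkl) hpgt
    nlinarith [hω ij.2]
  · intro hδ
    -- from kl's IC: ω kl.2 * (g kl.1 (p kl) - g kl.1 (p ij)) ≥ δ kl - δ ij > 0
    have hg' : g kl.1 (p ij) < g kl.1 (p kl) := by nlinarith [hω kl.2]
    by_contra hle
    push_neg at hle
    exact absurd hg' (not_lt.2 ((hg kl.1).monotoneOn (hp kl hkl) (hp ij hij) hle))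
end

section
/- In the heterogeneous mobility model, if a contract is feasible, then the critical quality types are monotone in mobility: for mobility indices l > j (so η_l > η_j), m_l ≤ m_j. Equivalently, it cannot happen that some quality level k is a Bill at mobility j but a Linus at mobility l > j. -/
/-- Heterogeneous mobility model: in a feasible contract the critical
quality types are monotone in mobility: `η_j < η_l` implies `m_l ≤ m_j`. -/
theorem critical_types_monotone_in_mobility
    (μ ν N : ℝ) (hμ : 0 < μ) (hν : 0 < ν) (hN : 0 < N)
    (η : ℕ → ℝ) (hη : ∀ l, η l ∈ Set.Ioo (0:ℝ) 1)
    (g : ℕ → ℝ → ℝ) (p δ : ℕ × ℕ → ℝ) (m : ℕ → ℕ)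
    (hIR : ∀ j k : ℕ, m j ≤ k →
      μ * g k (p (k, j)) - δ (k, j) - (1 - η j) / N * ν ≥ 0)
    (hIC : ∀ l k : ℕ, k < m l → ∀ j : ℕ, m j ≤ k →
      μ * g k (p (k, j)) - δ (k, j) - (1 - η l) / N * ν ≤ 0) :
    ∀ l j : ℕ, η j < η l → m l ≤ m j := by
  intro l j hlt
  by_contra h
  push_neg at h
  have h1 := hIR j (m j) le_rfl
  have h2 := hIC l (m j) h j le_rfl
  have hNpos : (0:ℝ) < N := hN
  have hsub : 0 < η l - η j := by linarith
  have : (η l - η j) / N * ν > 0 := by positivity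
  have hdiff : (1 - η j) / N * ν - (1 - η l) / N * ν = (η l - η j) / N * ν := by ring
  linarith
end
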